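/- Let T be a tree of height ω₁ that has a cofinal branch. Then ◊ implies ◊_T. Moreover, if T is in addition an ω₁-tree, then ◊ and ◊_T are equivalent. -/

import Mathlib

open Set

/-- The first uncountable ordinal `ω₁`. -/
noncomputable def omega1 : Ordinal := Ordinal.omega 1

section TreeDefs

variable {T : Type*} [PartialOrder T]

/-- In a tree, the set of strict predecessors of any node is linearly ordered. -/
def PredsChain (T : Type*) [PartialOrder T] : Prop :=
  ∀ t : T, IsChain (· ≤ ·) {s : T | s < t}

/-- `ht` is *the* height function of the tree: it is strictly monotone on comparable pairs and
the heights of the strict predecessors of `t` are exactly the ordinals below `ht t`; together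
with `PredsChain` this says that the set `t↓` of strict predecessors of `t` is well-ordered
with order type `ht t`. -/
def IsHeightFun (ht : T → Ordinal) : Prop :=
  (∀ s t : T, s < t → ht s < ht t) ∧
  ∀ t : T, ∀ o : Ordinal, o < ht t → ∃ s : T, s < t ∧ ht s = o

/-- The tree has height `ω₁`: every node has height `< ω₁` and every countable ordinal is the
height of some node. -/
def HeightOmega1 (ht : T → Ordinal) : Prop :=
  (∀ t : T, ht t < omega1) ∧ ∀ o : Ordinal, o < omega1 → ∃ t : T, ht t = o

/-- All levels of the tree are countable. -/
def CountableLevels (ht : T → Ordinal) : Prop :=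
  ∀ o : Ordinal, {t : T | ht t = o}.Countable

/-- A tree of height `ω₁` is well-pruned if every node has successors in all later levels. -/
def WellPruned (ht : T → Ordinal) : Prop :=
  ∀ o o' : Ordinal, o < o' → o' < omega1 →
    ∀ s : T, ht s = o → ∃ t : T, s < t ∧ ht t = o'

/-- A special subset of a tree: a union of countably many antichains. -/
def IsSpecialSet (U : Set T) : Prop :=
  ∃ A : ℕ → Set T, (∀ n : ℕ, IsAntichain (· ≤ ·) (A n)) ∧ U ⊆ ⋃ n, A n

/-- Membership in the ideal `NS^T`: there is a regressive map on `B` all of whose fibers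
are special. -/
def InNS [OrderBot T] (B : Set T) : Prop :=
  ∃ f : T → T, (∀ t ∈ B, t ≠ ⊥ → f t < t) ∧
    ∀ t : T, IsSpecialSet {s : T | s ∈ B ∧ f s = t}

/-- The diamond principle `◊_T` for a tree `T`. -/
def DiamondTree (T : Type*) [PartialOrder T] [OrderBot T] : Prop :=
  ∃ D : T → Set T, (∀ t : T, D t ⊆ Set.Iio t) ∧
    ∀ X : Set T, ¬ InNS {t : T | X ∩ Set.Iio t = D t}

end TreeDefs

/-- Club subsets of `ω₁`: closed and unbounded in `ω₁`. -/
def IsClubIn (C : Set Ordinal) : Prop :=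
  C ⊆ Set.Iio omega1 ∧
  (∀ o : Ordinal, o < omega1 → ∃ b ∈ C, o < b) ∧
  ∀ o : Ordinal, o < omega1 → (C ∩ Set.Iio o).Nonempty →
    IsLUB (C ∩ Set.Iio o) o → o ∈ C

/-- Stationary subsets of `ω₁`: sets meeting every club. -/
def IsStationaryIn (S : Set Ordinal) : Prop :=
  ∀ C : Set Ordinal, IsClubIn C → (S ∩ C).Nonempty

/-- The diamond principle `◊(S)` for `S ⊆ ω₁`;  `◊` is `DiamondOn (Set.Iio omega1)`. -/
def DiamondOn (S : Set Ordinal) : Prop :=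
  ∃ D : Ordinal → Set Ordinal, (∀ o ∈ S, D o ⊆ Set.Iio o) ∧
    ∀ X : Set Ordinal, X ⊆ Set.Iio omega1 →
      IsStationaryIn {o ∈ S | X ∩ Set.Iio o = D o}

/-!
Along a cofinal branch the tree is a copy of `ω₁`, so `D t = {s < t | ht s ∈ D (ht t)}` carries
a `◊`-sequence `D` over to `T`. A regressive map with special fibres on the guessed nodes has
countable fibres on the branch, because a chain meets an antichain at most once; on the stationary
set of levels where the branch is guessed, this contradicts the pressing-down argument.

Conversely, if the levels are countable, the nodes whose heights avoid a club form a set in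
`NS^T`: send each node to its predecessor at the supremum of the club points below it. Enumerate
each level `α` as `(e α n)ₙ` and decode the guess at `e α n` through the heights `ω * ξ + n`.
Code `(Xₙ)` as the set of nodes of height `ω * ξ + n` with `ξ ∈ Xₙ`; it is guessed at some
`e α n` with `α` in any given club, and then `D n α = Xₙ ∩ α`. Hence one of the `D n` is a
`◊`-sequence.

`Ordinal.lift` identifies the ordinals below `ω₁` in different universes, and so transfers `◊`.
-/

open Ordinal

universe u v

section Omega1

lemma add_one_lt_omega1 {o : Ordinal} (h : o < omega1) : o + 1 < omega1 :=
  (Cardinal.isSuccLimit_omega 1).add_one_lt h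

open Cardinal in
lemma countable_Iio_of_lt_omega1 {o : Ordinal} (h : o < omega1) : (Iio o).Countable := by
  rw [← le_aleph0_iff_set_countable, Cardinal.mk_Iio_ordinal, lift_le_aleph0, ← lt_aleph_one_iff]
  exact lt_omega_iff_card_lt.1 h

lemma exists_lt_omega1_forall_lt {Z : Set Ordinal} (hZ : Z.Countable) (hZω : Z ⊆ Iio omega1) :
    ∃ κ < omega1, ∀ z ∈ Z, z < κ := by
  have := hZ.to_subtype
  refine ⟨(⨆ z : Z, (z : Ordinal)) + 1, add_one_lt_omega1 (iSup_lt_omega_one fun z ↦ hZω z.2),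
    fun z hz ↦ Order.lt_add_one_iff.2 (Ordinal.le_iSup (fun z : Z ↦ (z : Ordinal)) ⟨z, hz⟩)⟩

open Cardinal in
lemma omega0_mul_add_omega0_lt_omega1 {ξ : Ordinal} (h : ξ < omega1) : ω * ξ + ω < omega1 := by
  have hω : ω < omega1 := omega0_lt_omega_one
  rw [omega1, lt_omega_iff_card_lt] at h hω ⊢
  rw [card_add, card_mul]
  exact add_lt_of_lt (aleph0_le_aleph 1) (mul_lt_of_lt (aleph0_le_aleph 1) hω h) hω

lemma omega0_mul_add_natCast_inj {ξ ζ : Ordinal} {m n : ℕ}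
    (h : ω * ξ + m = ω * ζ + n) : ξ = ζ ∧ m = n := by
  have hdiv := congrArg (· / ω) h
  have hmod := congrArg (· % ω) h
  simp only [mul_add_div _ omega0_ne_zero, mul_add_mod_self, add_zero, Nat.cast_inj,
    div_eq_zero_of_lt (natCast_lt_omega0 _), mod_eq_of_lt (natCast_lt_omega0 _)] at hdiv hmod
  exact ⟨hdiv, hmod⟩

end Omega1

section Clubs

def closurePoints (h : Ordinal → Ordinal) : Set Ordinal :=
  {o | o < omega1 ∧ 0 < o ∧ ∀ b < o, h b < o}

variable {h : Ordinal → Ordinal}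

lemma closurePoints_anti {h' : Ordinal → Ordinal} (hle : ∀ o, h o ≤ h' o) :
    closurePoints h' ⊆ closurePoints h :=
  fun _ ⟨hω, hpos, hcl⟩ ↦ ⟨hω, hpos, fun b hb ↦ (hle b).trans_lt (hcl b hb)⟩

lemma exists_mem_closurePoints_gt (hh : ∀ o < omega1, h o < omega1) {o : Ordinal} (ho : o < omega1) :
    ∃ c ∈ closurePoints h, o < c := by
  have hstep : ∀ x, ∃ κ, x < omega1 → κ < omega1 ∧ x < κ ∧ ∀ b < x, h b < κ := fun x ↦ by
    by_cases hx : x < omega1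
    · obtain ⟨κ, hκ, hlt⟩ := exists_lt_omega1_forall_lt
        (((countable_Iio_of_lt_omega1 hx).image h).insert x)
        (insert_subset hx (image_subset_iff.2 fun b hb ↦ hh b (hb.trans hx)))
      exact ⟨κ, fun _ ↦ ⟨hκ, hlt x (mem_insert x _),
        fun b hb ↦ hlt _ (mem_insert_of_mem _ (mem_image_of_mem h hb))⟩⟩
    · exact ⟨0, fun hx' ↦ absurd hx' hx⟩
  choose nxt hnxt using hstep
  set a : ℕ → Ordinal := fun k ↦ nxt^[k] o
  have ha : ∀ k, a k < omega1 := fun k ↦ by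
    induction k with
    | zero => exact ho
    | succ k ih => simpa [a, Function.iterate_succ_apply'] using (hnxt _ ih).1
  have hsucc : ∀ k, a (k + 1) = nxt (a k) := fun k ↦ Function.iterate_succ_apply' nxt k o
  have hle : ∀ k, a k ≤ ⨆ k, a k := Ordinal.le_iSup a
  have hlt0 : o < ⨆ k, a k := ((hnxt o ho).2.1).trans_le (hle 1)
  refine ⟨⨆ k, a k, ⟨iSup_lt_omega_one ha, pos_of_gt hlt0, fun b hb ↦ ?_⟩, hlt0⟩
  obtain ⟨k, hk⟩ := Ordinal.lt_iSup_iff.1 hb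
  exact ((hnxt _ (ha k)).2.2 b hk).trans_le (hsucc k ▸ hle (k + 1))

lemma isClubIn_closurePoints (hh : ∀ o < omega1, h o < omega1) : IsClubIn (closurePoints h) := by
  refine ⟨fun o ho ↦ ho.1, fun o ho ↦ exists_mem_closurePoints_gt hh ho, ?_⟩
  rintro o ho ⟨c, hc, hco⟩ hlub
  refine ⟨ho, hc.2.1.trans hco, fun b hb ↦ ?_⟩
  obtain ⟨c', ⟨hc', hc'o⟩, hbc'⟩ : ∃ c' ∈ closurePoints h ∩ Iio o, b < c' := by
    by_contra! hno
    exact hb.not_ge (hlub.2 hno)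
  exact (hc'.2.2 b hbc').trans hc'o

lemma IsClubIn.exists_closurePoints_subset {C : Set Ordinal} (hC : IsClubIn C) :
    ∃ h : Ordinal → Ordinal, (∀ o < omega1, h o < omega1) ∧ closurePoints h ⊆ C := by
  have hnext : ∀ o, ∃ c, o < omega1 → c ∈ C ∧ o < c := fun o ↦ by
    by_cases ho : o < omega1
    · obtain ⟨c, hc, hoc⟩ := hC.2.1 o ho
      exact ⟨c, fun _ ↦ ⟨hc, hoc⟩⟩
    · exact ⟨0, fun ho' ↦ absurd ho' ho⟩
  choose nxt hnxt using hnext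
  refine ⟨nxt, fun o ho ↦ hC.1 (hnxt o ho).1, ?_⟩
  rintro α ⟨hα, hpos, hcl⟩
  have hmem : ∀ b < α, nxt b ∈ C ∩ Iio α := fun b hb ↦ ⟨(hnxt b (hb.trans hα)).1, hcl b hb⟩
  refine hC.2.2 α hα ⟨_, hmem 0 hpos⟩ ⟨fun x hx ↦ hx.2.le, fun x hx ↦ ?_⟩
  by_contra! hxα
  exact (hx (hmem x hxα)).not_gt (hnxt x (hxα.trans hα)).2

end Clubs

section Stationary

lemma IsStationaryIn.mono {S S' : Set Ordinal} (hS : IsStationaryIn S) (hSS' : S ⊆ S') :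
    IsStationaryIn S' :=
  fun C hC ↦ (hS C hC).mono (inter_subset_inter_left C hSS')

lemma IsStationaryIn.exists_not_countable_fiber {S : Set Ordinal} (hS : IsStationaryIn S)
    {g : Ordinal → Ordinal} (hg : ∀ α ∈ S, 0 < α → g α < α) :
    ∃ β, ¬ {α ∈ S | 0 < α ∧ g α = β}.Countable := by
  by_contra! hfib
  choose κ hκ hlt using fun β ↦
    exists_lt_omega1_forall_lt ((hfib β).mono inter_subset_left) inter_subset_right
  obtain ⟨α, hαS, hαω, hpos, hcl⟩ := hS _ (isClubIn_closurePoints fun β _ ↦ hκ β)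
  exact (hlt (g α) α ⟨⟨hαS, hpos, rfl⟩, hαω⟩).not_gt (hcl _ (hg α hαS hpos))

lemma diamondOn_of_forall_isStationaryIn_exists_eq (D : ℕ → Ordinal.{u} → Set Ordinal.{u})
    (hD : ∀ n, ∀ o < omega1, D n o ⊆ Iio o)
    (hguess : ∀ X : ℕ → Set Ordinal, (∀ n, X n ⊆ Iio omega1) →
      IsStationaryIn {α ∈ Iio omega1 | ∃ n, X n ∩ Iio α = D n α}) :
    DiamondOn (Iio omega1.{u}) := by
  by_contra hnd
  have hfail : ∀ n, ∃ X ⊆ Iio omega1, ∃ C, IsClubIn C ∧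
      ∀ α ∈ C, α < omega1 → X ∩ Iio α ≠ D n α := fun n ↦ by
    by_contra! hall
    refine hnd ⟨D n, hD n, fun X hX C hC ↦ ?_⟩
    obtain ⟨α, hαC, hα, hαX⟩ := hall X hX C hC
    exact ⟨α, ⟨hα, hαX⟩, hαC⟩
  choose X hX C hC hmiss using hfail
  choose h hh hhC using fun n ↦ (hC n).exists_closurePoints_subset
  have hH : ∀ o < omega1, (⨆ n, h n o) < omega1 :=
    fun o ho ↦ iSup_lt_omega_one fun n ↦ hh n o ho
  obtain ⟨α, ⟨hα, n, hαn⟩, hαH⟩ := hguess X hX _ (isClubIn_closurePoints hH)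
  have hαh : α ∈ closurePoints (h n) :=
    closurePoints_anti (fun o ↦ Ordinal.le_iSup (fun n ↦ h n o) n) hαH
  exact hmiss n α (hhC n hαh) hα hαn

end Stationary

section UniverseLift

lemma lift_lt_omega1 {o : Ordinal.{u}} : lift.{v} o < omega1 ↔ o < omega1 :=
  lift_lt_omega_one

lemma lift_injective : Function.Injective lift.{v, u} := fun _ _ ↦ Ordinal.lift_inj.1

lemma Iio_omega1_subset_range_lift : Iio omega1.{max u v} ⊆ range lift.{v, u} :=
  fun _ ho ↦ mem_range_lift_of_le (a := omega1.{u}) (by simpa [omega1] using ho.le)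

lemma forall_lt_omega1_lift {P : Ordinal.{max u v} → Prop} :
    (∀ o < omega1, P o) ↔ ∀ o : Ordinal.{u}, o < omega1 → P (lift.{v} o) := by
  refine ⟨fun h o ho ↦ h _ (lift_lt_omega1.2 ho), fun h o ho ↦ ?_⟩
  obtain ⟨o, rfl⟩ := Iio_omega1_subset_range_lift.{u, v} ho
  exact h o (lift_lt_omega1.1 ho)

lemma image_lift_inter_Iio (S : Set Ordinal.{u}) (o : Ordinal.{u}) :
    lift.{v} '' S ∩ Iio (lift.{v} o) = lift.{v} '' (S ∩ Iio o) := by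
  ext x
  constructor
  · rintro ⟨⟨y, hy, rfl⟩, hyo⟩
    exact ⟨y, ⟨hy, lift_lt.1 hyo⟩, rfl⟩
  · rintro ⟨y, ⟨hy, hyo⟩, rfl⟩
    exact ⟨⟨y, hy, rfl⟩, lift_lt.2 hyo⟩

lemma isLUB_image_lift_iff {S : Set Ordinal.{u}} {o : Ordinal.{u}} :
    IsLUB (lift.{v} '' S) (lift.{v} o) ↔ IsLUB S o := by
  refine ⟨fun h ↦ ⟨fun x hx ↦ lift_le.1 (h.1 ⟨x, hx, rfl⟩), fun x hx ↦ lift_le.1 (h.2 ?_)⟩,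
    fun h ↦ ⟨?_, fun x hx ↦ ?_⟩⟩
  · rintro _ ⟨y, hy, rfl⟩
    exact lift_le.2 (hx hy)
  · rintro _ ⟨y, hy, rfl⟩
    exact lift_le.2 (h.1 hy)
  · by_contra! hxo
    obtain ⟨x, rfl⟩ := mem_range_lift_of_le hxo.le
    exact (lift_lt.1 hxo).not_ge (h.2 fun y hy ↦ lift_le.1 (hx ⟨y, hy, rfl⟩))

lemma isClubIn_image_lift_iff {C : Set Ordinal.{u}} :
    IsClubIn (lift.{v} '' C) ↔ IsClubIn C := by
  unfold IsClubIn
  rw [forall_lt_omega1_lift.{u, v}, forall_lt_omega1_lift.{u, v}]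
  simp only [subset_def, forall_mem_image, mem_Iio, lift_lt_omega1, exists_mem_image,
    Ordinal.lift_lt, image_lift_inter_Iio, image_nonempty, isLUB_image_lift_iff]
  simp only [lift_injective.mem_set_image]

lemma isStationaryIn_image_lift_iff {S : Set Ordinal.{u}} :
    IsStationaryIn (lift.{v} '' S) ↔ IsStationaryIn S := by
  refine ⟨fun hS C hC ↦ ?_, fun hS C hC ↦ ?_⟩
  · obtain ⟨_, ⟨x, hx, rfl⟩, hxC⟩ := hS _ (isClubIn_image_lift_iff.2 hC)
    exact ⟨x, hx, lift_injective.mem_set_image.1 hxC⟩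
  · have hC' : lift.{v} '' (lift.{v} ⁻¹' C) = C :=
      image_preimage_eq_of_subset (hC.1.trans Iio_omega1_subset_range_lift.{u, v})
    obtain ⟨x, hxS, hxC⟩ := hS _ (isClubIn_image_lift_iff.1 (hC' ▸ hC))
    exact ⟨lift.{v} x, mem_image_of_mem _ hxS, hxC⟩

theorem diamondOn_lift_iff : DiamondOn.{max u v} (Iio omega1) ↔ DiamondOn.{u} (Iio omega1) := by
  have hguess {X D : Set Ordinal.{u}} {o : Ordinal.{u}} :
      lift.{v} '' X ∩ Iio (lift.{v} o) = lift.{v} '' D ↔ X ∩ Iio o = D := by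
    rw [image_lift_inter_Iio, (image_injective.2 lift_injective).eq_iff]
  constructor
  · rintro ⟨D, hD, hstat⟩
    refine ⟨fun o ↦ lift.{v} ⁻¹' D (lift.{v} o), fun o ho x hx ↦ ?_, fun X hX ↦ ?_⟩
    · exact Ordinal.lift_lt.1 (hD _ (lift_lt_omega1.2 ho) hx)
    refine isStationaryIn_image_lift_iff.1 ((hstat (lift.{v} '' X) ?_).mono ?_)
    · rintro _ ⟨x, hx, rfl⟩
      exact lift_lt_omega1.2 (hX hx)
    · rintro o' ⟨ho', hX'⟩
      obtain ⟨o, rfl⟩ := Iio_omega1_subset_range_lift.{u, v} ho'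
      refine ⟨o, ⟨lift_lt_omega1.1 ho', hguess.1 ?_⟩, rfl⟩
      rw [hX', image_preimage_eq_of_subset
        ((hD _ ho').trans ((Iio_subset_Iio ho'.le).trans Iio_omega1_subset_range_lift.{u, v}))]
  · rintro ⟨D, hD, hstat⟩
    set D' : Ordinal.{max u v} → Set Ordinal.{max u v} :=
      fun o' ↦ ⋃ o ∈ lift.{v} ⁻¹' {o'}, lift.{v} '' D o
    have hD' : ∀ o, D' (lift.{v} o) = lift.{v} '' D o := fun o ↦ by
      ext x
      simp [D']
    refine ⟨D', forall_lt_omega1_lift.{u, v}.2 fun o ho ↦ ?_, fun X hX ↦ ?_⟩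
    · rw [hD']
      rintro _ ⟨x, hx, rfl⟩
      exact Ordinal.lift_lt.2 (hD o ho hx)
    have hX' : lift.{v} '' (lift.{v} ⁻¹' X) = X :=
      image_preimage_eq_of_subset (hX.trans Iio_omega1_subset_range_lift.{u, v})
    refine (isStationaryIn_image_lift_iff.{u, v}.2 (hstat (lift.{v} ⁻¹' X) fun x hx ↦ ?_)).mono ?_
    · exact lift_lt_omega1.1 (hX hx)
    · rintro _ ⟨o, ⟨ho, hXo⟩, rfl⟩
      refine ⟨lift_lt_omega1.2 ho, ?_⟩
      rw [hD', ← hX']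
      exact hguess.2 hXo

theorem diamondOn_Iio_omega1_univ_iff :
    DiamondOn.{u} (Iio omega1) ↔ DiamondOn.{v} (Iio omega1) :=
  diamondOn_lift_iff.{u, v}.symm.trans diamondOn_lift_iff.{v, u}

end UniverseLift

section Trees

variable {T : Type*} {ht : T → Ordinal}

lemma CountableLevels.countable_setOf_lt (hlev : CountableLevels ht) {δ : Ordinal}
    (hδ : δ < omega1) : {t : T | ht t < δ}.Countable := by
  have : {t : T | ht t < δ} = ⋃ o ∈ Iio δ, {t | ht t = o} := by ext; simp
  exact this ▸ (countable_Iio_of_lt_omega1 hδ).biUnion fun o _ ↦ hlev o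

variable [PartialOrder T]

lemma IsSpecialSet.mono {U V : Set T} (hV : IsSpecialSet V) (hUV : U ⊆ V) : IsSpecialSet U :=
  let ⟨A, hA, hVA⟩ := hV
  ⟨A, hA, hUV.trans hVA⟩

lemma isSpecialSet_of_countable {U : Set T} (hU : U.Countable) : IsSpecialSet U := by
  obtain rfl | ⟨x, -⟩ := U.eq_empty_or_nonempty
  · exact ⟨fun _ ↦ ∅, fun _ ↦ subsingleton_empty.isAntichain _, empty_subset _⟩
  have : Nonempty T := ⟨x⟩
  obtain ⟨e, he⟩ := countable_iff_exists_subset_range.1 hU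
  refine ⟨fun n ↦ {e n}, fun n ↦ subsingleton_singleton.isAntichain _, fun t ht ↦ ?_⟩
  obtain ⟨n, rfl⟩ := he ht
  exact mem_iUnion.2 ⟨n, rfl⟩

lemma IsSpecialSet.countable_inter_of_isChain {U B : Set T} (hU : IsSpecialSet U)
    (hB : IsChain (· ≤ ·) B) : (U ∩ B).Countable := by
  obtain ⟨A, hA, hUA⟩ := hU
  refine (countable_iUnion fun n ↦
    (inter_subsingleton_of_isAntichain_of_isChain (hA n) hB).countable).mono ?_
  rintro t ⟨htU, htB⟩
  obtain ⟨n, hn⟩ := mem_iUnion.1 (hUA htU)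
  exact mem_iUnion.2 ⟨n, hn, htB⟩

lemma InNS.mono [OrderBot T] {B B' : Set T} (hB : InNS B) (hB' : B' ⊆ B) : InNS B' :=
  let ⟨f, hreg, hfib⟩ := hB
  ⟨f, fun t ht ↦ hreg t (hB' ht), fun t ↦ (hfib t).mono fun _ hs ↦ ⟨hB' hs.1, hs.2⟩⟩

lemma IsHeightFun.ne_bot_of_pos [OrderBot T] (hht : IsHeightFun ht) {t : T} (h : 0 < ht t) :
    t ≠ ⊥ := by
  obtain ⟨s, hst, -⟩ := hht.2 t 0 h
  exact hst.ne_bot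

lemma IsHeightFun.pos_of_ne_bot [OrderBot T] (hht : IsHeightFun ht) {t : T} (h : t ≠ ⊥) :
    0 < ht t :=
  pos_of_gt (hht.1 ⊥ t (bot_lt_iff_ne_bot.2 h))

lemma IsHeightFun.lt_of_isChain (hht : IsHeightFun ht) {B : Set T} (hB : IsChain (· ≤ ·) B)
    {s t : T} (hsB : s ∈ B) (htB : t ∈ B) (h : ht s < ht t) : s < t := by
  have hne : s ≠ t := by rintro rfl; exact h.false
  refine ((hB.total hsB htB).resolve_right fun hts ↦ ?_).lt_of_ne hne
  exact (hht.1 t s (hts.lt_of_ne hne.symm)).not_gt h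

lemma IsHeightFun.eq_of_lt_of_lt (hchain : PredsChain T) (hht : IsHeightFun ht) {s s' t : T}
    (hs : s < t) (hs' : s' < t) (he : ht s = ht s') : s = s' := by
  by_contra hne
  rcases hchain t hs hs' hne with hle | hle
  · exact (hht.1 s s' (hle.lt_of_ne hne)).ne he
  · exact (hht.1 s' s (hle.lt_of_ne (Ne.symm hne))).ne he.symm

end Trees

section NonstationaryIdeal

lemma IsClubIn.sSup_inter_Iio_lt {C : Set Ordinal} (hC : IsClubIn C) {o : Ordinal}
    (ho : o < omega1) (hpos : 0 < o) (hoC : o ∉ C) : sSup (C ∩ Iio o) < o := by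
  obtain hempty | hne := (C ∩ Iio o).eq_empty_or_nonempty
  · rwa [hempty, csSup_empty]
  have hbdd : BddAbove (C ∩ Iio o) := ⟨o, fun x hx ↦ le_of_lt hx.2⟩
  refine (csSup_le hne fun x hx ↦ le_of_lt hx.2).lt_of_ne fun heq ↦ hoC ?_
  exact hC.2.2 o ho hne (heq ▸ isLUB_csSup hne hbdd :)

lemma lt_of_sSup_inter_Iio_lt {C : Set Ordinal} {c o : Ordinal} (hc : c ∈ C) (hoC : o ∉ C)
    (h : sSup (C ∩ Iio o) < c) : o < c := by
  by_contra! hco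
  have hco' : c < o := hco.lt_of_ne fun hco ↦ hoC (hco ▸ hc)
  exact h.not_ge (le_csSup ⟨o, fun x hx ↦ le_of_lt hx.2⟩ ⟨hc, hco'⟩)

variable {T : Type*} [PartialOrder T] [OrderBot T] {ht : T → Ordinal}

theorem inNS_setOf_ht_notMem (hht : IsHeightFun ht) (hlt : ∀ t, ht t < omega1)
    (hlev : CountableLevels ht) {C : Set Ordinal} (hC : IsClubIn C) :
    InNS {t : T | ht t ∉ C} := by
  have hpred : ∀ t, ∃ s, t ≠ ⊥ → ht t ∉ C → s < t ∧ ht s = sSup (C ∩ Iio (ht t)) := fun t ↦ by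
    by_cases h : t ≠ ⊥ ∧ ht t ∉ C
    · obtain ⟨s, hs⟩ := hht.2 t _ (hC.sSup_inter_Iio_lt (hlt t) (hht.pos_of_ne_bot h.1) h.2)
      exact ⟨s, fun _ _ ↦ hs⟩
    · exact ⟨t, fun h₁ h₂ ↦ absurd ⟨h₁, h₂⟩ h⟩
  choose f hf using hpred
  refine ⟨f, fun t htC hne ↦ (hf t hne htC).1, fun u ↦ ?_⟩
  obtain ⟨c, hc, huc⟩ := hC.2.1 (ht u) (hlt u)
  refine (isSpecialSet_of_countable ((hlev.countable_setOf_lt (hC.1 hc)).insert ⊥)).mono ?_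
  rintro s ⟨hsC, rfl⟩
  by_cases hs : s = ⊥
  · exact Or.inl hs
  · exact Or.inr (lt_of_sSup_inter_Iio_lt hc hsC ((hf s hs hsC).2 ▸ huc))

end NonstationaryIdeal

section Diamonds

variable {T : Type u} [PartialOrder T] [OrderBot T] {ht : T → Ordinal.{v}}

theorem diamondTree_of_diamondOn (hchain : PredsChain T) (hht : IsHeightFun ht)
    (hbranch : ∃ B : Set T, IsChain (· ≤ ·) B ∧ ∀ o : Ordinal, o < omega1 → ∃ t ∈ B, ht t = o)
    (hdiam : DiamondOn (Iio omega1.{v})) : DiamondTree T := by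
  obtain ⟨B, hB, hBlev⟩ := hbranch
  choose! b hbB hbht using hBlev
  have hpred : ∀ α < omega1, ∀ s < b α, s = b (ht s) := fun α hα s hs ↦ by
    have hsα : ht s < α := hbht α hα ▸ hht.1 s (b α) hs
    have hlt : b (ht s) < b α := hht.lt_of_isChain hB (hbB _ (hsα.trans hα)) (hbB α hα)
      (by rw [hbht _ (hsα.trans hα), hbht α hα]; exact hsα)
    exact hht.eq_of_lt_of_lt hchain hs hlt (hbht _ (hsα.trans hα)).symm
  obtain ⟨D, -, hD⟩ := hdiam
  refine ⟨fun t ↦ {s | s < t ∧ ht s ∈ D (ht t)}, fun t s hs ↦ hs.1, ?_⟩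
  rintro X ⟨f, hreg, hfib⟩
  set Y : Set Ordinal := {o | o < omega1 ∧ b o ∈ X}
  have hguess : ∀ α ∈ {o ∈ Iio omega1 | Y ∩ Iio o = D o},
      X ∩ Iio (b α) = {s | s < b α ∧ ht s ∈ D (ht (b α))} := by
    rintro α ⟨hα, hYα⟩
    ext s
    simp only [mem_inter_iff, mem_Iio, mem_ofPred_eq, hbht α hα, ← hYα]
    refine ⟨fun ⟨hsX, hs⟩ ↦ ?_, fun ⟨hs, ⟨_, hbX⟩, _⟩ ↦ ⟨hpred α hα s hs ▸ hbX, hs⟩⟩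
    have hsα : ht s < α := hbht α hα ▸ hht.1 _ _ hs
    exact ⟨hs, ⟨hsα.trans hα, hpred α hα s hs ▸ hsX⟩, hsα⟩
  have hregα : ∀ α ∈ {o ∈ Iio omega1 | Y ∩ Iio o = D o}, 0 < α → f (b α) < b α :=
    fun α hα hpos ↦ hreg _ (hguess α hα) (hht.ne_bot_of_pos (by rwa [hbht α hα.1]))
  obtain ⟨β, hβ⟩ := (hD Y fun o ho ↦ ho.1).exists_not_countable_fiber
    (g := fun α ↦ ht (f (b α))) fun α hα hpos ↦ (hht.1 _ _ (hregα α hα hpos)).trans_eq (hbht α hα.1)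
  have hcount := (hfib (b β)).countable_inter_of_isChain hB
  refine hβ (MapsTo.countable_of_injOn (f := b) ?_ ?_ hcount)
  · rintro α ⟨hα, hpos, rfl⟩
    refine ⟨⟨hguess α hα, hpred α hα.1 _ (hregα α hα hpos)⟩, hbB α hα.1⟩
  · rintro α ⟨hα, -⟩ α' ⟨hα', -⟩ h
    rw [← hbht α hα.1, ← hbht α' hα'.1, h]

theorem diamondOn_of_diamondTree (hht : IsHeightFun ht) (hlt : ∀ t, ht t < omega1)
    (hlev : CountableLevels ht) (hdt : DiamondTree T) : DiamondOn (Iio omega1.{v}) := by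
  obtain ⟨Dt, -, hDt⟩ := hdt
  choose e he using fun α ↦ countable_iff_exists_subset_range.1 (hlev α)
  refine diamondOn_of_forall_isStationaryIn_exists_eq
    (fun n α ↦ {ξ | ξ < α ∧ ω * ξ + n ∈ ht '' Dt (e α n)}) (fun n α _ ξ hξ ↦ hξ.1) ?_
  intro X hX C hC
  set Xt : Set T := {t | ∃ n, ∃ ξ ∈ X n, ht t = ω * ξ + n}
  obtain ⟨h, hh, hhC⟩ := hC.exists_closurePoints_subset
  have hH : ∀ o < omega1, max (h o) (ω * o + ω) < omega1 :=
    fun o ho ↦ max_lt (hh o ho) (omega0_mul_add_omega0_lt_omega1 ho)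
  obtain ⟨t, htG, htH⟩ : ∃ t, Xt ∩ Iio t = Dt t ∧ ht t ∈ closurePoints _ := by
    by_contra! hno
    exact hDt Xt ((inNS_setOf_ht_notMem hht hlt hlev (isClubIn_closurePoints hH)).mono hno)
  obtain ⟨n, hn⟩ := he (ht t) rfl
  refine ⟨ht t, ⟨htH.1, n, ?_⟩, hhC (closurePoints_anti (fun _ ↦ le_max_left _ _) htH)⟩
  ext ξ
  simp only [mem_inter_iff, mem_Iio, mem_ofPred_eq, hn, ← htG, mem_image]
  constructor
  · rintro ⟨hξX, hξ⟩
    have hcode : ω * ξ + n < ht t := calc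
      ω * ξ + n < ω * ξ + ω := (add_lt_add_iff_left _).2 (natCast_lt_omega0 n)
      _ ≤ max (h ξ) (ω * ξ + ω) := le_max_right _ _
      _ < ht t := htH.2.2 ξ hξ
    obtain ⟨s, hst, hs⟩ := hht.2 t _ hcode
    exact ⟨hξ, s, ⟨⟨n, ξ, hξX, hs⟩, hst⟩, hs⟩
  · rintro ⟨hξ, s, ⟨⟨m, ζ, hζX, hs⟩, -⟩, hs'⟩
    obtain ⟨rfl, rfl⟩ := omega0_mul_add_natCast_inj (hs.symm.trans hs')
    exact ⟨hζX, hξ⟩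

end Diamonds

/-- Let `T` be a tree of height `ω₁` with a cofinal branch (a chain meeting
every level). Then `◊` implies `◊_T`; moreover if `T` is in addition an `ω₁`-tree
(all levels countable), then `◊` and `◊_T` are equivalent. -/
theorem stmt8 {T : Type*} [PartialOrder T] [OrderBot T]
    (hchain : PredsChain T) (ht : T → Ordinal)
    (hht : IsHeightFun ht) (hΩ : HeightOmega1 ht)
    (hbranch : ∃ B : Set T, IsChain (· ≤ ·) B ∧
      ∀ o : Ordinal, o < omega1 → ∃ t ∈ B, ht t = o) :
    (DiamondOn (Set.Iio omega1) → DiamondTree T) ∧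
    (CountableLevels ht → (DiamondOn (Set.Iio omega1) ↔ DiamondTree T)) := by
  have hdiamondTree := diamondTree_of_diamondOn hchain hht hbranch
  have hdiamondOn (hlev : CountableLevels ht) := diamondOn_of_diamondTree hht hΩ.1 hlev
  exact ⟨fun h ↦ hdiamondTree (diamondOn_Iio_omega1_univ_iff.1 h), fun hlev ↦
    ⟨fun h ↦ hdiamondTree (diamondOn_Iio_omega1_univ_iff.1 h),
      fun h ↦ diamondOn_Iio_omega1_univ_iff.1 (hdiamondOn hlev h)⟩⟩
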